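/- arXiv:1702.00249 — 5 statements merged into one kernel-verified Lean document; each statement's English description precedes it below -/
import Mathlib

section
/- Let m, ℓ be positive integers and d an integer with 0 < d < 2^m. Then there are at least 2^{ℓ+m-1} integers j with 0 ≤ j < 2^{ℓ+m} such that |{dj}_{2^m}| ≤ 2^{m-2}, where {u}_n denotes the representative of u mod n in [-n/2, n/2). -/
/-- `smod u n` is `u` reduced modulo `n` constrained to `[-n/2, n/2)` (for even positive `n`). -/
def smod (u n : ℤ) : ℤ := (u + n / 2) % n - n / 2

/-!
Write `n = 2 ^ m = 2h`. Shifting by `h` moves the balanced residue `{u}_n` by `± h`, so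
`|{u}_n| + |{u + h}_n| = h`; hence whenever `|{dj}_n| > 2^(m-2)`, the shifted residue is good.
Since `2^m ∤ d`, some `t` has `dt ≡ 2^(m-1) (mod 2^m)`, and `j ↦ (j + t) mod 2^(ℓ+m)` is then an
injection of the bad `j` into the good ones, so at least half of all `j` are good.
-/

lemma smod_modEq (u n : ℤ) : smod u n ≡ u [ZMOD n] := by
  simpa [smod] using (Int.mod_modEq (u + n / 2) n).sub_right (n / 2)

section Smod

variable {n : ℤ}

lemma neg_half_le_smod (u : ℤ) (hn : 0 < n) : -(n / 2) ≤ smod u n := by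
  have := Int.emod_nonneg (u + n / 2) hn.ne'
  unfold smod; omega

lemma smod_lt (u : ℤ) (hn : 0 < n) : smod u n < n - n / 2 := by
  have := Int.emod_lt_of_pos (u + n / 2) hn
  unfold smod; omega

lemma smod_eq_of_modEq {u v : ℤ} (h : u ≡ v [ZMOD n]) : smod u n = smod v n := by
  unfold smod
  rw [Int.ModEq.add_right (n / 2) h]

lemma smod_eq_of_modEq_of_mem {u v : ℤ} (h : v ≡ u [ZMOD n]) (hv₁ : -(n / 2) ≤ v)
    (hv₂ : v < n - n / 2) : smod u n = v := by
  unfold smod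
  rw [← Int.ModEq.add_right (n / 2) h, Int.emod_eq_of_lt (by omega) (by omega)]
  ring

lemma abs_smod_add_abs_smod_add_half {h : ℤ} (hh : 0 < h) (u : ℤ) :
    |smod u (2 * h)| + |smod (u + h) (2 * h)| = h := by
  have hhalf : 2 * h / 2 = h := by omega
  have hlo := neg_half_le_smod u (n := 2 * h) (by omega)
  have hhi := smod_lt u (n := 2 * h) (by omega)
  have hmod := smod_modEq u (2 * h)
  rw [hhalf] at hlo hhi
  rcases lt_or_ge (smod u (2 * h)) 0 with hneg | hnonneg
  · rw [smod_eq_of_modEq_of_mem (v := smod u (2 * h) + h) (hmod.add_right h)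
      (by omega) (by omega)]
    rw [abs_of_neg hneg, abs_of_nonneg (by omega)]; ring
  · have hshift : smod u (2 * h) - h ≡ smod u (2 * h) + h [ZMOD 2 * h] := by
      simp [Int.ModEq, show smod u (2 * h) + h = smod u (2 * h) - h + 2 * h by ring]
    rw [smod_eq_of_modEq_of_mem (hshift.trans (hmod.add_right h)) (by omega) (by omega)]
    rw [abs_of_nonneg hnonneg, abs_of_neg (by omega)]; ring

end Smod

lemma abs_smod_add_half_le {h q : ℤ} (hh : 0 < h) (hq : h ≤ 2 * q + 1) {u : ℤ}
    (hu : q < |smod u (2 * h)|) : |smod (u + h) (2 * h)| ≤ q := by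
  linarith [abs_smod_add_abs_smod_add_half hh u]

lemma abs_smod_two_pow_add_le {m : ℕ} (hm : 1 ≤ m) {u : ℤ}
    (hu : ¬|smod u (2 ^ m)| ≤ 2 ^ (m - 2)) :
    |smod (u + 2 ^ (m - 1)) (2 ^ m)| ≤ 2 ^ (m - 2) := by
  have hpow : (2 : ℤ) ^ m = 2 * 2 ^ (m - 1) := by rw [← pow_succ']; congr 1; omega
  have hq : (2 : ℤ) ^ (m - 1) ≤ 2 * 2 ^ (m - 2) + 1 := by
    rcases Nat.lt_or_ge m 2 with hm2 | hm2
    -- for `m = 1` the truncated exponent `m - 2` is `0`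
    · interval_cases m; norm_num
    · rw [← pow_succ', show m - 2 + 1 = m - 1 by omega]; omega
  rw [hpow] at hu ⊢
  exact abs_smod_add_half_le (by positivity) hq (not_le.mp hu)

lemma Int.exists_mul_modEq_prime_pow_pred {p m : ℕ} (hp : p.Prime) {d : ℤ}
    (hd : ¬(p : ℤ) ^ m ∣ d) :
    ∃ t, d * t ≡ p ^ (m - 1) [ZMOD p ^ m] := by
  have hgcd : Int.gcd d (p ^ m) ∣ p ^ m := by exact_mod_cast Int.gcd_dvd_right d ((p : ℤ) ^ m)
  obtain ⟨a, ham, hg⟩ := (Nat.dvd_prime_pow hp).1 hgcd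
  have ha : a ≤ m - 1 := by
    rcases ham.lt_or_eq with h | rfl
    · omega
    · exact absurd (by exact_mod_cast hg ▸ Int.gcd_dvd_left d ((p : ℤ) ^ a)) hd
  obtain ⟨t, y, hty⟩ :=
    Int.gcd_dvd_iff.1 (hg ▸ pow_dvd_pow p ha : Int.gcd d (p ^ m) ∣ p ^ (m - 1))
  exact ⟨t, Int.modEq_iff_dvd.2 ⟨y, by push_cast at hty; linarith⟩⟩

lemma Int.injOn_add_emod (t N : ℤ) : Set.InjOn (fun j => (j + t) % N) (Set.Ico 0 N) := by
  intro a ha b hb hab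
  have : a ≡ b [ZMOD N] := Int.ModEq.add_right_cancel' t hab
  rwa [Int.ModEq, Int.emod_eq_of_lt ha.1 ha.2, Int.emod_eq_of_lt hb.1 hb.2] at this

lemma card_le_two_mul_card_filter_of_injOn {α : Type*} {s : Finset α} {p : α → Prop}
    [DecidablePred p] {f : α → α} (hf : Set.InjOn f s)
    (hmaps : ∀ a ∈ s, ¬p a → f a ∈ s ∧ p (f a)) :
    s.card ≤ 2 * (s.filter p).card := by
  have hle : (s.filter (¬p ·)).card ≤ (s.filter p).card :=
    Finset.card_le_card_of_injOn f
      (fun a ha => by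
        simp only [Finset.coe_filter, Set.mem_ofPred_eq] at ha ⊢
        exact hmaps a ha.1 ha.2)
      (hf.mono (Finset.coe_subset.2 (Finset.filter_subset _ s)))
  have := Finset.card_filter_add_card_filter_not (s := s) p
  omega

theorem count_good_j_general (m ℓ : ℕ) (hm : 1 ≤ m) (d : ℤ)
    (hd : 0 < d) (hd' : d < 2 ^ m) :
    2 ^ (ℓ + m - 1) ≤
      ((Finset.Ico (0 : ℤ) (2 ^ (ℓ + m))).filter
        (fun j => |smod (d * j) (2 ^ m)| ≤ 2 ^ (m - 2))).card := by
  obtain ⟨t, ht⟩ := Int.exists_mul_modEq_prime_pow_pred (m := m) Nat.prime_two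
    (by exact_mod_cast fun h => (Int.le_of_dvd hd h).not_gt hd')
  set N : ℤ := 2 ^ (ℓ + m)
  have hN : 0 < N := by positivity
  have hcard := card_le_two_mul_card_filter_of_injOn (s := Finset.Ico 0 N)
    (p := fun j => |smod (d * j) (2 ^ m)| ≤ 2 ^ (m - 2)) (f := fun j => (j + t) % N)
    (by simpa using Int.injOn_add_emod t N) fun j _ hj => by
      refine ⟨Finset.mem_Ico.2 ⟨Int.emod_nonneg _ hN.ne', Int.emod_lt_of_pos _ hN⟩, ?_⟩
      have hshift : d * ((j + t) % N) ≡ d * j + 2 ^ (m - 1) [ZMOD 2 ^ m] :=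
        (((Int.mod_modEq _ _).of_dvd (pow_dvd_pow 2 (by omega))).mul_left d).trans
          (by rw [mul_add]; exact_mod_cast ht.add_left _)
      rw [smod_eq_of_modEq hshift]
      exact abs_smod_two_pow_add_le hm hj
  have hN' : (N - 0).toNat = 2 * 2 ^ (ℓ + m - 1) := by
    rw [sub_zero, ← pow_succ', show ℓ + m - 1 + 1 = ℓ + m by omega]
    exact_mod_cast Int.toNat_natCast (2 ^ (ℓ + m))
  rw [Int.card_Ico, hN'] at hcard
  omega

theorem count_good_j (m ℓ : ℕ) (hm : 1 ≤ m) (hl : 1 ≤ ℓ) (d : ℤ)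
    (hd : 0 < d) (hd' : d < 2 ^ m) :
    2 ^ (ℓ + m - 1) ≤
      ((Finset.Ico (0 : ℤ) (2 ^ (ℓ + m))).filter
        (fun j => |smod (d * j) (2 ^ m)| ≤ 2 ^ (m - 2))).card :=
  count_good_j_general m ℓ hm d hd hd'
end

section
/- Let m, ℓ, κ be nonnegative integers with κ ≤ m - 1. As j ranges over the integers 0 ≤ j < 2^{ℓ+m}, the map j ↦ (2^κ · u · j) mod 2^m, where u is odd and d = 2^κ u, takes each multiple of 2^κ in [0, 2^m) exactly 2^{ℓ+κ} times. -/
/-!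
Write `d = 2^κ u`, `r = 2^κ s` and `2^m = 2^κ 2^n`. Cancelling `2^κ`, the condition
`d j ≡ r (mod 2^m)` becomes `u j ≡ s (mod 2^n)`, and since `u` is odd it is invertible mod `2^n`,
so this singles out one residue class mod `2^n`. The interval `[0, 2^(ℓ+m))` is the union of
`2^(ℓ+κ)` blocks of length `2^n`, each containing exactly one member of that class.
-/

open Finset

namespace Int

theorem card_filter_modEq_Ico_add_mul {q : ℤ} (hq : 0 < q) (a c : ℤ) (k : ℕ) :
    #{j ∈ Ico a (a + k * q) | j ≡ c [ZMOD q]} = k := by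
  have hshift : ((a + k * q : ℤ) - c : ℚ) / q = (a - c : ℚ) / q + (k : ℤ) := by
    push_cast
    field_simp
    ring
  rw [← Nat.cast_inj (R := ℤ), Ico_filter_modEq_card _ _ hq, hshift, ceil_add_intCast,
    add_sub_cancel_left, max_eq_left (by positivity)]

theorem mul_modEq_iff_of_mul_add_mul_eq_one {u q a b : ℤ} (hab : a * u + b * q = 1) (j s : ℤ) :
    u * j ≡ s [ZMOD q] ↔ j ≡ a * s [ZMOD q] := by
  have hau : a * u ≡ 1 [ZMOD q] := modEq_iff_dvd.2 ⟨b, by linear_combination -hab⟩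
  constructor
  · intro h
    calc j = 1 * j := (one_mul j).symm
      _ ≡ a * u * j [ZMOD q] := hau.symm.mul_right j
      _ = a * (u * j) := mul_assoc a u j
      _ ≡ a * s [ZMOD q] := h.mul_left a
  · intro h
    calc u * j ≡ u * (a * s) [ZMOD q] := h.mul_left u
      _ = a * u * s := by ring
      _ ≡ 1 * s [ZMOD q] := hau.mul_right s
      _ = s := one_mul s

theorem card_filter_mul_modEq_Ico_add_mul {q u : ℤ} (hq : 0 < q) (hu : IsCoprime u q)
    (a s : ℤ) (k : ℕ) : #{j ∈ Ico a (a + k * q) | u * j ≡ s [ZMOD q]} = k := by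
  obtain ⟨x, y, hxy⟩ := hu
  simp_rw [mul_modEq_iff_of_mul_add_mul_eq_one hxy]
  exact card_filter_modEq_Ico_add_mul hq a _ k

end Int

theorem count_preimages_mul_mod_general (m ℓ κ : ℕ) (hκ : κ ≤ m - 1)
    (u d : ℤ) (hu : Odd u) (hdu : d = 2 ^ κ * u)
    (r : ℤ) (hr0 : 0 ≤ r) (hr1 : r < 2 ^ m) (hrdvd : (2 : ℤ) ^ κ ∣ r) :
    ((Finset.Ico (0 : ℤ) (2 ^ (ℓ + m))).filter
        (fun j => (d * j) % 2 ^ m = r)).card = 2 ^ (ℓ + κ) := by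
  obtain ⟨s, rfl⟩ := hrdvd
  obtain ⟨n, rfl⟩ : ∃ n, m = κ + n := ⟨m - κ, by omega⟩
  have hcond (j : ℤ) : (d * j) % 2 ^ (κ + n) = 2 ^ κ * s ↔ u * j ≡ s [ZMOD 2 ^ n] := by
    rw [← Int.emod_eq_of_lt hr0 hr1, hdu, mul_assoc, pow_add]
    exact Int.ModEq.mul_left_cancel_iff' (by positivity)
  have hlen : (2 : ℤ) ^ (ℓ + (κ + n)) = 0 + ((2 ^ (ℓ + κ) : ℕ) : ℤ) * 2 ^ n := by
    push_cast
    ring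
  rw [filter_congr fun j _ => hcond j, hlen]
  exact Int.card_filter_mul_modEq_Ico_add_mul (by positivity)
    ((Int.isCoprime_two_right.2 hu).pow_right) 0 s _

theorem count_preimages_mul_mod (m ℓ κ : ℕ) (hm : 1 ≤ m) (hl : 1 ≤ ℓ) (hκ : κ ≤ m - 1)
    (u d : ℤ) (hu : Odd u) (hdu : d = 2 ^ κ * u) (hd : 0 < d) (hd' : d < 2 ^ m)
    (r : ℤ) (hr0 : 0 ≤ r) (hr1 : r < 2 ^ m) (hrdvd : (2 : ℤ) ^ κ ∣ r) :
    ((Finset.Ico (0 : ℤ) (2 ^ (ℓ + m))).filter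
        (fun j => (d * j) % 2 ^ m = r)).card = 2 ^ (ℓ + κ) :=
  count_preimages_mul_mod_general m ℓ κ hκ u d hu hdu r hr0 hr1 hrdvd
end

section
/- Let T_e denote the number of pairs (a, b) with 0 ≤ a < 2^{ℓ+m}, 0 ≤ b < 2^ℓ and a - bd = e, where 0 < d < 2^m. Then Σ_{e=-2^{ℓ+m}}^{2^{ℓ+m}-1} T_e² ≥ 2^{3ℓ+m-1}. -/
/-!
The fibres `T e` of `(a, b) ↦ a - b d` partition the `2 ^ (2ℓ + m)` pairs, and since
`0 ≤ b d < 2 ^ (ℓ + m)` every value `e` lies in a window of `2 ^ (ℓ + m + 1)` integers.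
Cauchy–Schwarz over that window gives `(2 ^ (2ℓ + m)) ^ 2 ≤ 2 ^ (ℓ + m + 1) ∑ T e ^ 2`.
-/

open Finset

theorem card_sq_le_card_mul_sum_card_fiber_sq {ι M : Type*} [DecidableEq M] {f : ι → M}
    {s : Finset ι} {t : Finset M} (H : (s : Set ι).MapsTo f t) :
    #s ^ 2 ≤ #t * ∑ b ∈ t, #{a ∈ s | f a = b} ^ 2 := by
  rw [card_eq_sum_card_fiberwise H]
  exact sq_sum_le_card_mul_sum_sq

theorem mapsTo_sub_mul_Ico_prod_Ico {N L d : ℤ} (hd : 0 ≤ d) (hLd : L * d ≤ N) :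
    ((Ico 0 N ×ˢ Ico 0 L : Finset (ℤ × ℤ)) : Set (ℤ × ℤ)).MapsTo
      (fun p => p.1 - p.2 * d) (Ico (-N) N) := by
  rintro ⟨a, b⟩ hab
  simp only [coe_product, coe_Ico, Set.mem_prod, Set.mem_Ico] at hab
  obtain ⟨⟨ha₀, haN⟩, hb₀, hbL⟩ := hab
  have hbd : b * d ≤ L * d := mul_le_mul_of_nonneg_right hbL.le hd
  simp only [coe_Ico, Set.mem_Ico]
  constructor <;> nlinarith

theorem Int.card_Ico_zero_two_pow (n : ℕ) : #(Ico (0 : ℤ) (2 ^ n)) = 2 ^ n := by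
  rw [Int.card_Ico, sub_zero, ← Int.toNat_natCast (2 ^ n)]
  push_cast
  rfl

theorem Int.card_Ico_neg_two_pow_two_pow (n : ℕ) : #(Ico (-2 ^ n : ℤ) (2 ^ n)) = 2 ^ (n + 1) := by
  rw [Int.card_Ico, ← Int.toNat_natCast (2 ^ (n + 1))]
  push_cast
  ring_nf

theorem sum_Te_sq_general (m ℓ : ℕ) (d : ℤ) (hd : 0 < d) (hd' : d < 2 ^ m)
    (T : ℤ → ℕ)
    (hT : ∀ e : ℤ, T e =
      ((Finset.Ico (0 : ℤ) (2 ^ (ℓ + m)) ×ˢ Finset.Ico (0 : ℤ) (2 ^ ℓ)).filter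
        (fun p => p.1 - p.2 * d = e)).card) :
    2 ^ (3 * ℓ + m - 1) ≤
      ∑ e ∈ Finset.Ico (-(2 ^ (ℓ + m)) : ℤ) (2 ^ (ℓ + m)), (T e) ^ 2 := by
  have hm : m ≠ 0 := by
    rintro rfl
    rw [pow_zero] at hd'
    omega
  have hmaps := mapsTo_sub_mul_Ico_prod_Ico (N := 2 ^ (ℓ + m)) (L := 2 ^ ℓ) hd.le
    (by rw [pow_add]; gcongr)
  have key := card_sq_le_card_mul_sum_card_fiber_sq hmaps
  simp only [← hT, card_product, Int.card_Ico_zero_two_pow,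
    Int.card_Ico_neg_two_pow_two_pow] at key
  have hpow : 2 ^ (ℓ + m + 1) * 2 ^ (3 * ℓ + m - 1) = (2 ^ (ℓ + m) * 2 ^ ℓ) ^ 2 := by
    rw [← pow_add, ← pow_add, ← pow_mul]
    congr 1
    omega
  exact Nat.le_of_mul_le_mul_left (hpow ▸ key) (by positivity)

theorem sum_Te_sq (m ℓ : ℕ) (hm : 1 ≤ m) (hl : 1 ≤ ℓ) (d : ℤ) (hd : 0 < d) (hd' : d < 2 ^ m)
    (T : ℤ → ℕ)
    (hT : ∀ e : ℤ, T e =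
      ((Finset.Ico (0 : ℤ) (2 ^ (ℓ + m)) ×ˢ Finset.Ico (0 : ℤ) (2 ^ ℓ)).filter
        (fun p => p.1 - p.2 * d = e)).card) :
    2 ^ (3 * ℓ + m - 1) ≤
      ∑ e ∈ Finset.Ico (-(2 ^ (ℓ + m)) : ℤ) (2 ^ (ℓ + m)), (T e) ^ 2 :=
  sum_Te_sq_general m ℓ d hd hd' T hT
end

section
/- Fix m, ℓ, s ≥ 1 and 0 < d < 2^m and choose the tuple (j_1,...,j_s) uniformly at random from the set of tuples where each j_i is good (there are at least 2^{ℓ+m-1} good j's for each coordinate). Then the probability that the lattice L generated by (j_1,...,j_s,1) and 2^{ℓ+m} e_i contains a nonzero vector u = (u_1,...,u_{s+1}) with |u_i| < 2^{m-3} for all i is at most 2^{-s-1}. -/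
/-!
If the lattice of `j` contains a nonzero `u` with all `|u i| < M = 2 ^ (m - 3)`, then its last
coordinate `a` is nonzero with `|a| < M`, and `u i ≡ a * j i [ZMOD N]` for `N = 2 ^ (ℓ + m)`.
For fixed `a`, each residue mod `N` has at most `gcd N a` preimages under `j ↦ a * j`, only
multiples of `gcd N a` are hit, and `gcd N a ∣ M` since both are powers of two. So at most `2 * M`
values `j ∈ [0, N)` make `a * j` short mod `N`, and at most `(2 * M) ^ (s + 1)` tuples are bad.
Conversely at least half of `[0, N)` is good: for `k` with `d * k ≡ 2 ^ (m - 1) [ZMOD 2 ^ m]`, one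
of `j` and `j + k` is good, and translation by `k` permutes the residues mod `N`. Hence there are
at least `2 ^ ((ℓ + m - 1) * s)` good tuples, and `m ≤ ℓ * s` makes the ratio at most
`2 ^ (-(s + 1))`.
-/

open Finset

lemma smod_congr {a b n : ℤ} (h : a ≡ b [ZMOD n]) : smod a n = smod b n :=
  congrArg (· - n / 2) (h.add_right (n / 2))

lemma abs_smod_le_or_abs_smod_add_le {h q : ℤ} (hh : 0 < h) (hq : h ≤ 2 * q) (r : ℤ) :
    |smod r (2 * h)| ≤ q ∨ |smod (r + h) (2 * h)| ≤ q := by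
  obtain ⟨x, hx0, hx, hrx⟩ : ∃ x, 0 ≤ x ∧ x < 2 * h ∧ r ≡ x [ZMOD 2 * h] :=
    ⟨r % (2 * h), Int.emod_nonneg _ (by omega), Int.emod_lt_of_pos _ (by omega),
      (Int.mod_modEq _ _).symm⟩
  have hhalf : 2 * h / 2 = h := by omega
  have hsmod_add : smod (x + h) (2 * h) = x - h := by
    rw [smod, hhalf, add_assoc, ← two_mul, Int.add_emod_right, Int.emod_eq_of_lt hx0 hx]
  rw [smod_congr hrx, smod_congr (hrx.add_right h), hsmod_add, smod, hhalf]
  rcases lt_or_ge x h with hxh | hxh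
  · rw [Int.emod_eq_of_lt (by omega) (by omega : x + h < 2 * h), abs_le, abs_le]
    omega
  · rw [show x + h = x - h + 2 * h by ring, Int.add_emod_right,
      Int.emod_eq_of_lt (by omega) (by omega : x - h < 2 * h), abs_le, abs_le]
    omega

lemma Int.gcd_two_pow_left_eq (K : ℕ) (a : ℤ) : ∃ t ≤ K, Int.gcd (2 ^ K) a = 2 ^ t := by
  have h : Int.gcd (2 ^ K) a ∣ 2 ^ K := by
    simpa [Int.natAbs_pow] using Int.gcd_dvd_natAbs_left (2 ^ K) a
  exact (Nat.dvd_prime_pow Nat.prime_two).mp h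

lemma Int.gcd_two_pow_left_dvd_two_pow {K k : ℕ} {a : ℤ} (ha : a ≠ 0) (hak : |a| ≤ 2 ^ k) :
    (Int.gcd (2 ^ K) a : ℤ) ∣ 2 ^ k := by
  obtain ⟨t, -, ht⟩ := Int.gcd_two_pow_left_eq K a
  have hle : ((2 ^ t : ℕ) : ℤ) ≤ |a| :=
    ht ▸ Int.le_of_dvd (abs_pos.mpr ha) ((dvd_abs _ _).mpr (Int.gcd_dvd_right _ _))
  push_cast at hle ⊢
  rw [ht]
  exact pow_dvd_pow 2 ((pow_le_pow_iff_right₀ one_lt_two).mp (hle.trans hak))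

lemma exists_mul_modEq_two_pow_pred {m : ℕ} {d : ℤ} (hd : ¬ (2 : ℤ) ^ m ∣ d) :
    ∃ k, d * k ≡ 2 ^ (m - 1) [ZMOD 2 ^ m] := by
  obtain ⟨t, htm, ht⟩ := Int.gcd_two_pow_left_eq m d
  have htm' : t < m := by
    refine htm.lt_of_ne fun h => hd ?_
    simpa [ht, h] using Int.gcd_dvd_right ((2 : ℤ) ^ m) d
  have hdvd : Int.gcd d (2 ^ m) ∣ 2 ^ (m - 1) := by
    rw [Int.gcd_comm, ht]
    exact pow_dvd_pow 2 (by omega)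
  obtain ⟨x, y, hxy⟩ := Int.gcd_dvd_iff.mp hdvd
  refine ⟨x, Int.modEq_iff_dvd.mpr ⟨y, ?_⟩⟩
  push_cast at hxy
  rw [hxy]
  ring

lemma card_Ico_le_two_mul_card_filter {N k : ℤ} (hN : 0 < N) {P : ℤ → Prop} [DecidablePred P]
    (hP : ∀ j, P (j % N) ↔ P j) (hk : ∀ j, P j ∨ P (j + k)) :
    #(Ico 0 N) ≤ 2 * #{j ∈ Ico 0 N | P j} := by
  have hcover : Ico 0 N ⊆ {j ∈ Ico 0 N | P j} ∪ {j ∈ Ico 0 N | P ((j + k) % N)} := by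
    intro j hj
    rcases hk j with h | h
    · exact mem_union_left _ (mem_filter.mpr ⟨hj, h⟩)
    · exact mem_union_right _ (mem_filter.mpr ⟨hj, (hP _).mpr h⟩)
  -- translation by `k` permutes the residues mod `N`
  have hshift : #{j ∈ Ico 0 N | P ((j + k) % N)} ≤ #{j ∈ Ico 0 N | P j} := by
    refine card_le_card_of_injOn (fun j => (j + k) % N) (fun j hj => ?_) (fun i hi j hj hij => ?_)
    · simp only [coe_filter, Set.mem_ofPred_eq, mem_Ico] at hj ⊢
      exact ⟨⟨Int.emod_nonneg _ hN.ne', Int.emod_lt_of_pos _ hN⟩, hj.2⟩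
    · simp only [coe_filter, Set.mem_ofPred_eq, mem_Ico] at hi hj
      have h := Int.ModEq.add_right_cancel' k hij
      rwa [Int.ModEq, Int.emod_eq_of_lt hi.1.1 hi.1.2, Int.emod_eq_of_lt hj.1.1 hj.1.2] at h
  calc #(Ico 0 N) ≤ #({j ∈ Ico 0 N | P j} ∪ {j ∈ Ico 0 N | P ((j + k) % N)}) :=
        card_le_card hcover
    _ ≤ #{j ∈ Ico 0 N | P j} + #{j ∈ Ico 0 N | P ((j + k) % N)} := card_union_le _ _
    _ ≤ 2 * #{j ∈ Ico 0 N | P j} := by omega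

lemma two_pow_pred_le_card_filter_abs_smod_le {m K : ℕ} {d : ℤ} (hmK : m ≤ K)
    (hd : ¬ (2 : ℤ) ^ m ∣ d) :
    2 ^ (K - 1) ≤ #{j ∈ Ico (0 : ℤ) (2 ^ K) | |smod (d * j) (2 ^ m)| ≤ 2 ^ (m - 2)} := by
  have hm : 1 ≤ m := Nat.one_le_iff_ne_zero.mpr fun h => hd (by simp [h])
  have h2m : (2 : ℤ) ^ m = 2 * 2 ^ (m - 1) := by rw [← pow_succ']; congr 1; omega
  obtain ⟨k, hk⟩ := exists_mul_modEq_two_pow_pred hd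
  have hcard := card_Ico_le_two_mul_card_filter (N := 2 ^ K) (k := k) (by positivity)
    (P := fun j => |smod (d * j) (2 ^ m)| ≤ 2 ^ (m - 2))
    (fun j => by
      rw [smod_congr (((Int.mod_modEq j _).mul_left d).of_dvd (pow_dvd_pow 2 hmK))])
    (fun j => by
      rw [mul_add, smod_congr (Int.ModEq.add_left _ hk), h2m]
      refine abs_smod_le_or_abs_smod_add_le (by positivity) ?_ _
      rcases (by omega : m = 1 ∨ m - 1 = m - 2 + 1) with h | h
      · simp [h]
      · rw [h, pow_succ'])
  have hN : #(Ico (0 : ℤ) (2 ^ K)) = 2 ^ K := by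
    rw [Int.card_Ico, sub_zero]
    exact_mod_cast Int.toNat_natCast (2 ^ K)
  have hK : 2 ^ K = 2 * 2 ^ (K - 1) := by rw [← pow_succ']; congr 1; omega
  omega

def qaryLattice {s : ℕ} (N : ℤ) (j : Fin s → ℤ) : Submodule ℤ (Fin (s + 1) → ℤ) :=
  Submodule.span ℤ (Set.range (Fin.cons (Fin.snoc j 1) (fun i : Fin s => Pi.single i.castSucc N) :
    Fin (s + 1) → Fin (s + 1) → ℤ))

lemma modEq_of_mem_qaryLattice {s : ℕ} {N : ℤ} {j : Fin s → ℤ} {u : Fin (s + 1) → ℤ}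
    (hu : u ∈ qaryLattice N j) (i : Fin s) : u (Fin.last s) * j i ≡ u i.castSucc [ZMOD N] := by
  obtain ⟨c, rfl⟩ := (Submodule.mem_span_range_iff_exists_fun ℤ).mp hu
  refine Int.modEq_iff_dvd.mpr ⟨c i.succ, ?_⟩
  simp [Fin.sum_univ_succ, Pi.single_apply, mul_comm]

def HasShortVector {n : ℕ} (L : Submodule ℤ (Fin n → ℤ)) (B : ℤ) : Prop :=
  ∃ u : Fin n → ℤ, u ≠ 0 ∧ u ∈ L ∧ ∀ i, |u i| < B

lemma card_filter_mul_modEq_le {N : ℤ} (hN : 0 < N) (a u : ℤ) :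
    #{j ∈ Ico 0 N | a * j ≡ u [ZMOD N]} ≤ Int.gcd N a := by
  set g : ℤ := (Int.gcd N a : ℤ)
  have hg : 0 < g := by simp [g, Int.gcd_pos_iff, hN.ne']
  set n := N / g
  have hn : g * n = N := Int.mul_ediv_cancel' (Int.gcd_dvd_left N a)
  have hn0 : 0 < n := pos_of_mul_pos_right (hn ▸ hN) hg.le
  have hcard : #(Ico 0 g) = Int.gcd N a := by simp [g]
  rw [← hcard]
  refine card_le_card_of_injOn (· / n) (fun j hj => ?_) (fun i hi j hj hij => ?_)
  · simp only [coe_filter, Set.mem_ofPred_eq, mem_Ico, coe_Ico, Set.mem_Ico] at hj ⊢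
    exact ⟨Int.ediv_nonneg hj.1.1 hn0.le, (Int.ediv_lt_iff_lt_mul hn0).mpr (by nlinarith)⟩
  · simp only [coe_filter, Set.mem_ofPred_eq] at hi hj
    have hmod : i ≡ j [ZMOD n] := Int.ModEq.cancel_left_div_gcd hN (hi.2.trans hj.2.symm)
    rw [← Int.mul_ediv_add_emod i n, ← Int.mul_ediv_add_emod j n]
    simp only at hij
    rw [hij, hmod.eq]

lemma card_filter_dvd_Ioo_mul_le {g M : ℤ} (hg : 0 < g) (hM : 0 ≤ M) (hgM : g ∣ M) :
    (#{u ∈ Ioo (-M) M | g ∣ u} : ℤ) * g ≤ 2 * M := by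
  obtain ⟨t, rfl⟩ := hgM
  have ht : 0 ≤ t := nonneg_of_mul_nonneg_right hM hg
  have hsub : {u ∈ Ioo (-(g * t)) (g * t) | g ∣ u} ⊆ (Ico (-t) t).image (g * ·) := by
    intro u hu
    obtain ⟨⟨hlo, hhi⟩, v, rfl⟩ := by simpa only [mem_filter, mem_Ioo] using hu
    refine mem_image.mpr ⟨v, mem_Ico.mpr ⟨?_, ?_⟩, rfl⟩ <;> nlinarith
  have := (card_le_card hsub).trans card_image_le
  rw [Int.card_Ico, sub_neg_eq_add] at this
  have := Int.toNat_of_nonneg (by omega : 0 ≤ t + t)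
  nlinarith

lemma card_filter_exists_mem_Ioo_modEq_le {N M a : ℤ} (hN : 0 < N) (hM : 0 ≤ M)
    (ha : (Int.gcd N a : ℤ) ∣ M) :
    (#{j ∈ Ico 0 N | ∃ u ∈ Ioo (-M) M, a * j ≡ u [ZMOD N]} : ℤ) ≤ 2 * M := by
  have hsub : {j ∈ Ico 0 N | ∃ u ∈ Ioo (-M) M, a * j ≡ u [ZMOD N]} ⊆
      {u ∈ Ioo (-M) M | (Int.gcd N a : ℤ) ∣ u}.biUnion
        fun u => {j ∈ Ico 0 N | a * j ≡ u [ZMOD N]} := by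
    intro j hj
    obtain ⟨hj, u, hu, hmod⟩ := mem_filter.mp hj
    have hgu : (Int.gcd N a : ℤ) ∣ u := by
      simpa using dvd_add (dvd_mul_of_dvd_left (Int.gcd_dvd_right N a) j)
        ((Int.gcd_dvd_left N a).trans hmod.dvd)
    exact mem_biUnion.mpr ⟨u, mem_filter.mpr ⟨hu, hgu⟩, mem_filter.mpr ⟨hj, hmod⟩⟩
  calc (#{j ∈ Ico 0 N | ∃ u ∈ Ioo (-M) M, a * j ≡ u [ZMOD N]} : ℤ)
      ≤ ∑ u ∈ {u ∈ Ioo (-M) M | (Int.gcd N a : ℤ) ∣ u},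
          (#{j ∈ Ico 0 N | a * j ≡ u [ZMOD N]} : ℤ) := by
        exact_mod_cast (card_le_card hsub).trans card_biUnion_le
    _ ≤ #{u ∈ Ioo (-M) M | (Int.gcd N a : ℤ) ∣ u} * Int.gcd N a := by
        rw [← nsmul_eq_mul]
        exact sum_le_card_nsmul _ _ _ fun u _ => by
          exact_mod_cast card_filter_mul_modEq_le hN a u
    _ ≤ 2 * M := card_filter_dvd_Ioo_mul_le (by simp [Int.gcd_pos_iff, hN.ne']) hM ha

open scoped Classical in
lemma card_filter_hasShortVector_le {s : ℕ} {N M : ℤ} {G : Finset ℤ} (hG : G ⊆ Ico 0 N)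
    (hM : 0 < M) (hMN : M ≤ N) (hgcd : ∀ a, a ≠ 0 → |a| < M → (Int.gcd N a : ℤ) ∣ M) :
    (#{j ∈ Fintype.piFinset (fun _ : Fin s => G) | HasShortVector (qaryLattice N j) M} : ℤ) ≤
      (2 * M) ^ (s + 1) := by
  set S : ℤ → Finset ℤ := fun a => {j ∈ Ico 0 N | ∃ u ∈ Ioo (-M) M, a * j ≡ u [ZMOD N]}
  have hsub : {j ∈ Fintype.piFinset (fun _ : Fin s => G) | HasShortVector (qaryLattice N j) M} ⊆
      ((Ioo (-M) M).erase 0).biUnion fun a => Fintype.piFinset fun _ : Fin s => S a := by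
    intro j hj
    obtain ⟨hjG, u, hu0, hu, hshort⟩ := mem_filter.mp hj
    have hmod := modEq_of_mem_qaryLattice hu
    -- if the last coordinate vanished, every other one would be a multiple of `N > M`
    have ha : u (Fin.last s) ≠ 0 := by
      refine fun ha => hu0 (funext fun i => ?_)
      induction i using Fin.lastCases with
      | last => exact ha
      | cast i =>
        exact Int.eq_zero_of_abs_lt_dvd (by simpa [ha] using (hmod i).dvd)
          ((hshort _).trans_le hMN)
    refine mem_biUnion.mpr ⟨u (Fin.last s), mem_erase.mpr ⟨ha, mem_Ioo.mpr
      (abs_lt.mp (hshort _))⟩, Fintype.mem_piFinset.mpr fun i => mem_filter.mpr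
      ⟨hG (Fintype.mem_piFinset.mp hjG i), u i.castSucc, mem_Ioo.mpr (abs_lt.mp (hshort _)),
        hmod i⟩⟩
  have hS : ∀ a ∈ (Ioo (-M) M).erase 0, (#(S a) : ℤ) ≤ 2 * M := fun a ha => by
    obtain ⟨ha0, ha⟩ := mem_erase.mp ha
    exact card_filter_exists_mem_Ioo_modEq_le (hM.trans_le hMN) hM.le
      (hgcd a ha0 (abs_lt.mpr (mem_Ioo.mp ha)))
  have hcard : (#((Ioo (-M) M).erase 0) : ℤ) ≤ 2 * M := by
    rw [card_erase_of_mem (by simpa using hM), Int.card_Ioo]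
    omega
  calc (#{j ∈ Fintype.piFinset (fun _ : Fin s => G) | HasShortVector (qaryLattice N j) M} : ℤ)
      ≤ ∑ a ∈ (Ioo (-M) M).erase 0, (#(S a) : ℤ) ^ s := by
        exact_mod_cast (card_le_card hsub).trans (card_biUnion_le.trans_eq
          (by simp only [Fintype.card_piFinset_const]))
    _ ≤ #((Ioo (-M) M).erase 0) * (2 * M) ^ s := by
        rw [← nsmul_eq_mul]
        exact sum_le_card_nsmul _ _ _ fun a ha => pow_le_pow_left₀ (by positivity) (hS a ha) s
    _ ≤ (2 * M) ^ (s + 1) := by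
        rw [pow_succ']
        exact mul_le_mul_of_nonneg_right hcard (by positivity)

lemma not_hasShortVector_one {n : ℕ} (L : Submodule ℤ (Fin n → ℤ)) : ¬ HasShortVector L 1 :=
  fun ⟨_, hu0, _, hshort⟩ => hu0 (funext fun i => Int.abs_lt_one_iff.mp (hshort i))

lemma sub_one_mul_succ_le_of_le_mul {ℓ m s : ℕ} (h : m ≤ ℓ * s) :
    (m - 1) * (s + 1) ≤ (ℓ + m - 1) * s := by
  cases m with
  | zero => simp
  | succ k =>
    rw [Nat.add_sub_cancel, show ℓ + (k + 1) - 1 = ℓ + k by omega]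
    nlinarith

open scoped Classical in
theorem prob_short_vector_le_general (s ℓ m : ℕ) (hls : m ≤ ℓ * s) (d : ℤ) (hd : 0 < d) (hd' : d < 2 ^ m) :
    ((((Fintype.piFinset (fun _ : Fin s =>
        (Finset.Ico (0 : ℤ) (2 ^ (ℓ + m))).filter
          (fun j => |smod (d * j) (2 ^ m)| ≤ 2 ^ (m - 2)))).filter
      (fun j : Fin s → ℤ => ∃ u : Fin (s + 1) → ℤ, u ≠ 0 ∧
        u ∈ Submodule.span ℤ (Set.range
          (Fin.cons (Fin.snoc j 1)
            (fun i : Fin s => Pi.single i.castSucc ((2 : ℤ) ^ (ℓ + m))) :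
              Fin (s + 1) → Fin (s + 1) → ℤ)) ∧
        ∀ i, |u i| < 2 ^ (m - 3))).card : ℝ) /
      ((Fintype.piFinset (fun _ : Fin s =>
        (Finset.Ico (0 : ℤ) (2 ^ (ℓ + m))).filter
          (fun j => |smod (d * j) (2 ^ m)| ≤ 2 ^ (m - 2)))).card : ℝ)) ≤
    ((2 : ℝ) ^ (s + 1))⁻¹ := by
  set G := {j ∈ Ico (0 : ℤ) (2 ^ (ℓ + m)) | |smod (d * j) (2 ^ m)| ≤ 2 ^ (m - 2)}
  change (#{j ∈ Fintype.piFinset (fun _ : Fin s => G) |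
    HasShortVector (qaryLattice (2 ^ (ℓ + m)) j) (2 ^ (m - 3))} / _ : ℝ) ≤ _
  have hG : 2 ^ (ℓ + m - 1) ≤ #G := two_pow_pred_le_card_filter_abs_smod_le (by omega)
    fun h => (Int.le_of_dvd hd h).not_gt hd'
  have hGs : (0 : ℝ) < #G ^ s := by exact_mod_cast pow_pos (hG.trans_lt' (by positivity)) s
  rw [Fintype.card_piFinset_const, Nat.cast_pow, div_le_iff₀ hGs, inv_mul_eq_div,
    le_div_iff₀ (by positivity)]
  rcases lt_or_ge m 4 with hm | hm
  · -- for `m ≤ 3` the bound `2 ^ (m - 3)` is `1`, so no nonzero vector is short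
    rw [Nat.sub_eq_zero_of_le (by omega : m ≤ 3), pow_zero,
      filter_false_of_mem fun j _ => not_hasShortVector_one _]
    simp
  have hbad := card_filter_hasShortVector_le (s := s) (G := G) (filter_subset _ _)
    (by positivity : (0 : ℤ) < 2 ^ (m - 3)) (pow_le_pow_right₀ one_le_two (by omega))
    fun a ha0 ha => Int.gcd_two_pow_left_dvd_two_pow ha0 ha.le
  suffices h : (#{j ∈ Fintype.piFinset (fun _ : Fin s => G) |
      HasShortVector (qaryLattice (2 ^ (ℓ + m)) j) (2 ^ (m - 3))} : ℤ) * 2 ^ (s + 1) ≤ #G ^ s by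
    exact_mod_cast h
  calc _ ≤ ((2 : ℤ) * 2 ^ (m - 3)) ^ (s + 1) * 2 ^ (s + 1) := by gcongr
    _ = 2 ^ ((m - 1) * (s + 1)) := by
      rw [← mul_pow, ← pow_succ', ← pow_succ, ← pow_mul]; congr 2; omega
    _ ≤ 2 ^ ((ℓ + m - 1) * s) := pow_le_pow_right₀ one_le_two (sub_one_mul_succ_le_of_le_mul hls)
    _ ≤ #G ^ s := by rw [pow_mul]; exact_mod_cast Nat.pow_le_pow_left hG s

open scoped Classical in
theorem prob_short_vector_le (s ℓ m : ℕ) (hs : 1 ≤ s) (hl : 1 ≤ ℓ) (hm : 1 ≤ m)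
    (hls : m ≤ ℓ * s) (d : ℤ) (hd : 0 < d) (hd' : d < 2 ^ m) :
    ((((Fintype.piFinset (fun _ : Fin s =>
        (Finset.Ico (0 : ℤ) (2 ^ (ℓ + m))).filter
          (fun j => |smod (d * j) (2 ^ m)| ≤ 2 ^ (m - 2)))).filter
      (fun j : Fin s → ℤ => ∃ u : Fin (s + 1) → ℤ, u ≠ 0 ∧
        u ∈ Submodule.span ℤ (Set.range
          (Fin.cons (Fin.snoc j 1)
            (fun i : Fin s => Pi.single i.castSucc ((2 : ℤ) ^ (ℓ + m))) :
              Fin (s + 1) → Fin (s + 1) → ℤ)) ∧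
        ∀ i, |u i| < 2 ^ (m - 3))).card : ℝ) /
      ((Fintype.piFinset (fun _ : Fin s =>
        (Finset.Ico (0 : ℤ) (2 ^ (ℓ + m))).filter
          (fun j => |smod (d * j) (2 ^ m)| ≤ 2 ^ (m - 2)))).card : ℝ)) ≤
    ((2 : ℝ) ^ (s + 1))⁻¹ :=
  prob_short_vector_le_general s ℓ m hls d hd hd'
end

section
/- Let u = (u_1, ..., u_{s+1}) be a nonzero integer vector and suppose 2^κ is the largest power of 2 dividing u_{s+1}. If u belongs to a lattice L generated by (j_1,...,j_s,1) and 2^{ℓ+m} e_i (with 0 ≤ j_i < 2^{ℓ+m}, and ℓ+m > κ), then 2^κ divides u_i for every i, and the number of tuples (j_1,...,j_s) for which u ∈ L is exactly 2^{sκ}. -/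
/-!
Writing `N = 2 ^ (ℓ + m)`, the vector `u` lies in the lattice of `j` exactly when
`u i ≡ u_{s+1} j_i (mod N)` for every `i ≤ s`. Since `2 ^ κ ∣ N`, this forces `2 ^ κ ∣ u i`.
Writing `u_{s+1} = 2 ^ κ w` with `w` odd and `u i = 2 ^ κ a`, the `i`-th congruence becomes
`w j_i ≡ a (mod 2 ^ (ℓ + m - κ))`; as `w` is invertible modulo this power of two, it singles out
one residue class, which meets `[0, N)` in `2 ^ κ` points. The conditions on the different
coordinates are independent, so there are `(2 ^ κ) ^ s` admissible tuples `j`.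
-/

open Finset

section CongruenceLattice

variable {R : Type*} [CommRing R] {s : ℕ}

def latticeGenerators (N : R) (j : Fin s → R) : Fin (s + 1) → Fin (s + 1) → R :=
  Fin.cons (Fin.snoc j 1) fun i => Pi.single i.castSucc N

def congruenceLattice (N : R) (j : Fin s → R) : Submodule R (Fin (s + 1) → R) :=
  Submodule.span R (Set.range (latticeGenerators N j))

variable (N : R) (j : Fin s → R) (c : Fin (s + 1) → R)

lemma sum_smul_latticeGenerators_last :
    (∑ k, c k • latticeGenerators N j k) (Fin.last s) = c 0 := by
  simp [latticeGenerators, Fin.sum_univ_succ, Finset.sum_apply, (Fin.castSucc_lt_last _).ne']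

lemma sum_smul_latticeGenerators_castSucc (i : Fin s) :
    (∑ k, c k • latticeGenerators N j k) i.castSucc = c 0 * j i + c i.succ * N := by
  simp [latticeGenerators, Fin.sum_univ_succ, Finset.sum_apply, Pi.single_apply]

theorem mem_congruenceLattice_iff {u : Fin (s + 1) → R} :
    u ∈ congruenceLattice N j ↔ ∀ i, N ∣ u i.castSucc - u (Fin.last s) * j i := by
  rw [congruenceLattice, Submodule.mem_span_range_iff_exists_fun]
  constructor
  · rintro ⟨c, rfl⟩ i
    rw [sum_smul_latticeGenerators_castSucc, sum_smul_latticeGenerators_last]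
    exact ⟨c i.succ, by ring⟩
  · intro h
    choose q hq using h
    refine ⟨Fin.cons (u (Fin.last s)) q, funext fun k => Fin.lastCases ?_ (fun i => ?_) k⟩
    · rw [sum_smul_latticeGenerators_last, Fin.cons_zero]
    · rw [sum_smul_latticeGenerators_castSucc, Fin.cons_zero, Fin.cons_succ]
      linear_combination -(hq i)

theorem dvd_of_mem_congruenceLattice {d : R} {u : Fin (s + 1) → R} (hdN : d ∣ N)
    (hlast : d ∣ u (Fin.last s)) (hu : u ∈ congruenceLattice N j) (i : Fin (s + 1)) :
    d ∣ u i := by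
  refine Fin.lastCases hlast (fun i => ?_) i
  have hcong := hdN.trans ((mem_congruenceLattice_iff N j).1 hu i)
  simpa using dvd_add hcong (hlast.mul_right (j i))

open scoped Classical in
theorem card_filter_mem_congruenceLattice (B : Finset R) (u : Fin (s + 1) → R) :
    #{j ∈ Fintype.piFinset fun _ => B | u ∈ congruenceLattice N j} =
      ∏ i : Fin s, #{x ∈ B | N ∣ u i.castSucc - u (Fin.last s) * x} := by
  rw [← Fintype.card_piFinset]
  congr 1
  ext j
  simp only [mem_filter, Fintype.mem_piFinset, mem_congruenceLattice_iff, forall_and]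

end CongruenceLattice

namespace Int

theorem card_filter_modEq_Ico_mul {d k : ℤ} (hd : 0 < d) (hk : 0 ≤ k) (v : ℤ) :
    (#{x ∈ Ico 0 (d * k) | x ≡ v [ZMOD d]} : ℤ) = k := by
  have hquot : ((d : ℚ) * k - v) / d = (0 - v) / d + k := by
    field_simp
    ring
  rw [Int.Ico_filter_modEq_card _ _ hd, Int.cast_mul, hquot, Int.ceil_add_intCast]
  simp [hk]

theorem card_filter_dvd_sub_mul_Ico {d k w : ℤ} (hd : 0 < d) (hk : 0 ≤ k) (hw : IsCoprime w d)
    (a : ℤ) : (#{x ∈ Ico 0 (d * k) | d ∣ a - w * x} : ℤ) = k := by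
  obtain ⟨p, q, hpq⟩ := hw
  have hsolve : ∀ x, d ∣ a - w * x ↔ x ≡ p * a [ZMOD d] := by
    intro x
    rw [Int.modEq_iff_dvd]
    constructor
    · intro h
      have e : p * a - x = p * (a - w * x) + d * -(q * x) := by linear_combination x * hpq
      exact e ▸ dvd_add (h.mul_left p) (dvd_mul_right d _)
    · intro h
      have e : a - w * x = w * (p * a - x) + d * (q * a) := by linear_combination -a * hpq
      exact e ▸ dvd_add (h.mul_left w) (dvd_mul_right d _)
  simp_rw [hsolve]
  exact card_filter_modEq_Ico_mul hd hk _

end Int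

theorem card_filter_two_pow_dvd_sub {n κ : ℕ} (hκ : κ ≤ n) {w : ℤ} (hw : Odd w) (a : ℤ) :
    #{x ∈ Ico (0 : ℤ) (2 ^ n) | (2 : ℤ) ^ n ∣ 2 ^ κ * a - 2 ^ κ * w * x} = 2 ^ κ := by
  have hsplit : (2 : ℤ) ^ n = 2 ^ (n - κ) * 2 ^ κ := by rw [← pow_add, Nat.sub_add_cancel hκ]
  have hcancel : ∀ x : ℤ, (2 : ℤ) ^ n ∣ 2 ^ κ * a - 2 ^ κ * w * x ↔ 2 ^ (n - κ) ∣ a - w * x := by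
    intro x
    rw [hsplit, mul_comm, show (2 : ℤ) ^ κ * a - 2 ^ κ * w * x = 2 ^ κ * (a - w * x) by ring,
      mul_dvd_mul_iff_left (by positivity)]
  have hcop : IsCoprime w (2 ^ (n - κ)) := (Int.isCoprime_two_right.2 hw).pow_right
  simp_rw [hcancel, hsplit]
  exact_mod_cast Int.card_filter_dvd_sub_mul_Ico (k := 2 ^ κ) (by positivity) (by positivity) hcop a

open scoped Classical in
theorem short_vector_divisibility_and_count_general (s ℓ m : ℕ) (κ : ℕ) (hκ : κ < ℓ + m)
    (u : Fin (s + 1) → ℤ)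
    (h1 : (2 : ℤ) ^ κ ∣ u (Fin.last s)) (h2 : ¬ (2 : ℤ) ^ (κ + 1) ∣ u (Fin.last s))
    (hex : ∃ j : Fin s → ℤ, (∀ i, 0 ≤ j i ∧ j i < 2 ^ (ℓ + m)) ∧
      u ∈ Submodule.span ℤ (Set.range
        (Fin.cons (Fin.snoc j 1)
          (fun i : Fin s => Pi.single i.castSucc ((2 : ℤ) ^ (ℓ + m))) :
            Fin (s + 1) → Fin (s + 1) → ℤ))) :
    (∀ i, (2 : ℤ) ^ κ ∣ u i) ∧
    ((Fintype.piFinset (fun _ : Fin s => Finset.Ico (0 : ℤ) (2 ^ (ℓ + m)))).filter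
      (fun j : Fin s → ℤ =>
        u ∈ Submodule.span ℤ (Set.range
          (Fin.cons (Fin.snoc j 1)
            (fun i : Fin s => Pi.single i.castSucc ((2 : ℤ) ^ (ℓ + m))) :
              Fin (s + 1) → Fin (s + 1) → ℤ)))).card = 2 ^ (s * κ) := by
  obtain ⟨j₀, -, hj₀⟩ := hex
  have hdvd : ∀ i, (2 : ℤ) ^ κ ∣ u i :=
    dvd_of_mem_congruenceLattice _ j₀ (pow_dvd_pow 2 hκ.le) h1 hj₀
  refine ⟨hdvd, ?_⟩
  obtain ⟨w, hw⟩ := h1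
  have hw_odd : Odd w := by
    rw [← Int.not_even_iff_odd, even_iff_two_dvd]
    intro h
    apply h2
    rw [hw, pow_succ]
    exact mul_dvd_mul_left _ h
  have hcoord : ∀ i : Fin s,
      #{x ∈ Ico (0 : ℤ) (2 ^ (ℓ + m)) | 2 ^ (ℓ + m) ∣ u i.castSucc - u (Fin.last s) * x} =
        2 ^ κ := by
    intro i
    obtain ⟨a, ha⟩ := hdvd i.castSucc
    simpa only [ha, hw, mul_assoc] using card_filter_two_pow_dvd_sub hκ.le hw_odd a
  refine (card_filter_mem_congruenceLattice _ (Ico 0 _) u).trans ?_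
  -- `convert` reconciles the classical `Decidable` instance of the filter with `Int`'s own.
  rw [prod_congr rfl fun i _ => by convert hcoord i, prod_const, card_univ, Fintype.card_fin,
    ← pow_mul, mul_comm]

open scoped Classical in
theorem short_vector_divisibility_and_count (s ℓ m : ℕ) (hs : 1 ≤ s) (hl : 1 ≤ ℓ)
    (hm : 1 ≤ m) (κ : ℕ) (hκ : κ < ℓ + m)
    (u : Fin (s + 1) → ℤ) (hu : u ≠ 0)
    (h1 : (2 : ℤ) ^ κ ∣ u (Fin.last s)) (h2 : ¬ (2 : ℤ) ^ (κ + 1) ∣ u (Fin.last s))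
    (hex : ∃ j : Fin s → ℤ, (∀ i, 0 ≤ j i ∧ j i < 2 ^ (ℓ + m)) ∧
      u ∈ Submodule.span ℤ (Set.range
        (Fin.cons (Fin.snoc j 1)
          (fun i : Fin s => Pi.single i.castSucc ((2 : ℤ) ^ (ℓ + m))) :
            Fin (s + 1) → Fin (s + 1) → ℤ))) :
    (∀ i, (2 : ℤ) ^ κ ∣ u i) ∧
    ((Fintype.piFinset (fun _ : Fin s => Finset.Ico (0 : ℤ) (2 ^ (ℓ + m)))).filter
      (fun j : Fin s → ℤ =>
        u ∈ Submodule.span ℤ (Set.range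
          (Fin.cons (Fin.snoc j 1)
            (fun i : Fin s => Pi.single i.castSucc ((2 : ℤ) ^ (ℓ + m))) :
              Fin (s + 1) → Fin (s + 1) → ℤ)))).card = 2 ^ (s * κ) :=
  short_vector_divisibility_and_count_general s ℓ m κ hκ u h1 h2 hex
end
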